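/- arXiv:math/0208014 — 5 statements merged into one kernel-verified Lean document; each statement's English description precedes it below -/
import Mathlib

section
/- Max-plus Caratheodory theorem: Let S be an idempotent semiring whose natural order is total, and let G be a subset of S^n. If x lies in the subsemimodule of S^n spanned by G, then there is a subset B of G of cardinality at most n such that x lies in the span of B. -/
/-!
In an idempotent semiring with totally ordered natural order, a finite nonempty sum equals one
of its terms, and each term is below the sum. So if `x = ∑ i, c i • u i`, each coordinate `p` of
`x` is attained by a single term `c (σ p) • u (σ p)`; the at most `n` terms selected this way
sum to `x`, since all of them lie below `x` and coordinate `p` is attained by the `p`-th one.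
-/

/-- The subsemimodule of `V` spanned by a set `G`: all finite `S`-linear
combinations of elements of `G`. -/
def SpanSet (S : Type*) {V : Type*} [Semiring S] [AddCommMonoid V] [Module S V]
    (G : Set V) : Set V :=
  {x | ∃ (k : ℕ) (c : Fin k → S) (u : Fin k → V), (∀ i, u i ∈ G) ∧ x = ∑ i, c i • u i}

section IdempotentSum

variable {M ι : Type*} [AddCommMonoid M]

theorem Finset.exists_mem_sum_eq_of_total (htot : ∀ a b : M, a + b = b ∨ a + b = a)
    {s : Finset ι} (hs : s.Nonempty) (f : ι → M) : ∃ i ∈ s, ∑ j ∈ s, f j = f i := by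
  induction hs using Finset.Nonempty.cons_induction with
  | singleton a => exact ⟨a, Finset.mem_singleton_self a, Finset.sum_singleton f a⟩
  | cons a s ha hs ih =>
    obtain ⟨i, hi, hsum⟩ := ih
    rw [Finset.sum_cons, hsum]
    rcases htot (f a) (f i) with h | h
    · exact ⟨i, Finset.mem_cons_of_mem hi, h⟩
    · exact ⟨a, Finset.mem_cons_self a s, h⟩

theorem Finset.add_sum_eq_sum_of_mem (hid : ∀ a : M, a + a = a) {s : Finset ι} (f : ι → M)
    {i : ι} (hi : i ∈ s) : f i + ∑ j ∈ s, f j = ∑ j ∈ s, f j := by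
  classical
  rw [← Finset.add_sum_erase s f hi, ← add_assoc, hid]

theorem Finset.sum_add_eq_of_forall_add_eq {s : Finset ι} {f : ι → M} {a : M}
    (h : ∀ j ∈ s, f j + a = a) : (∑ j ∈ s, f j) + a = a :=
  Finset.sum_induction f (· + a = a) (fun b c hb hc => by rw [add_assoc, hc, hb]) (zero_add a) h

theorem Finset.sum_eq_of_forall_add_eq (hid : ∀ a : M, a + a = a) {s : Finset ι} {f : ι → M}
    {a : M} (h : ∀ j ∈ s, f j + a = a) {i : ι} (hi : i ∈ s) (hfi : f i = a) :
    ∑ j ∈ s, f j = a :=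
  calc ∑ j ∈ s, f j = a + ∑ j ∈ s, f j := by rw [← hfi, Finset.add_sum_eq_sum_of_mem hid f hi]
    _ = a := by rw [add_comm, Finset.sum_add_eq_of_forall_add_eq h]

theorem exists_sum_comp_eq_sum {η : Type*} [Fintype ι] [Nonempty ι] [Fintype η]
    (hid : ∀ a : M, a + a = a) (htot : ∀ a b : M, a + b = b ∨ a + b = a) (f : ι → η → M) :
    ∃ σ : η → ι, ∑ p, f (σ p) = ∑ i, f i := by
  have attained : ∀ p, ∃ i, ∑ j, f j p = f i p := fun p => by
    obtain ⟨i, -, h⟩ := Finset.exists_mem_sum_eq_of_total htot Finset.univ_nonempty (f · p)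
    exact ⟨i, h⟩
  choose σ hσ using attained
  refine ⟨σ, funext fun q => ?_⟩
  simp only [Finset.sum_apply]
  refine Finset.sum_eq_of_forall_add_eq hid (fun p _ => ?_) (Finset.mem_univ q) (hσ q).symm
  exact Finset.add_sum_eq_sum_of_mem hid (f · q) (Finset.mem_univ (σ p))

end IdempotentSum

/-- Max-plus Caratheodory theorem: let `S` be an idempotent semiring
whose natural order (`x ⪯ y ↔ x + y = y`) is total, and `G ⊆ S^n`. If `x` lies
in the span of `G`, then there is a subset `B ⊆ G` of cardinality at most `n`
such that `x` lies in the span of `B`. -/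
theorem maxplus_caratheodory {S : Type*} [Semiring S]
    (hid : ∀ a : S, a + a = a)
    (htot : ∀ x y : S, x + y = y ∨ x + y = x)
    {n : ℕ} (G : Set (Fin n → S)) (x : Fin n → S)
    (hx : x ∈ SpanSet S G) :
    ∃ B : Finset (Fin n → S), ↑B ⊆ G ∧ B.card ≤ n ∧ x ∈ SpanSet S (↑B : Set (Fin n → S)) := by
  classical
  obtain ⟨k, c, u, hu, rfl⟩ := hx
  rcases isEmpty_or_nonempty (Fin k) with _ | _
  · exact ⟨∅, by simp, by simp, ⟨k, c, u, isEmptyElim, rfl⟩⟩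
  obtain ⟨σ, hσ⟩ := exists_sum_comp_eq_sum hid htot fun i => c i • u i
  refine ⟨Finset.univ.image (u ∘ σ), ?_, ?_, ⟨n, c ∘ σ, u ∘ σ, ?_, hσ.symm⟩⟩
  · simpa [Set.range_subset_iff] using fun p => hu (σ p)
  · simpa using Finset.card_image_le (s := Finset.univ) (f := u ∘ σ)
  · simp
end

section
/- In a commutative monoid, every rational subset is semilinear: it can be written as a finite union of sets of the form {x} · B*, where x is an element of the monoid and B is a finite subset. -/
/-!
Semilinear sets contain the finite sets and are closed under union and product, the latter
because `({x} · B*) · ({y} · C*) = {x y} · (B ∪ C)*` in a commutative monoid. For the star,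
`(L₁ ∪ ⋯ ∪ Lₙ)* = L₁* ⋯ Lₙ*`, and the star of a linear set is again semilinear:
`({x} · B*)* = {1} ∪ {x} · (B ∪ {x})*`.
-/

open scoped Pointwise

/-- Rational subsets of a monoid. -/
inductive IsRational {M : Type*} [Monoid M] : Set M → Prop
  | finite (U : Set M) : U.Finite → IsRational U
  | union (U V : Set M) : IsRational U → IsRational V → IsRational (U ∪ V)
  | mul (U V : Set M) : IsRational U → IsRational V → IsRational (U * V)
  | star (U : Set M) : IsRational U → IsRational (Submonoid.closure U : Set M)

open Set

section Monoid

variable {M : Type*} [Monoid M]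

def IsLinear (L : Set M) : Prop :=
  ∃ (x : M) (B : Set M), B.Finite ∧ L = {x} * (Submonoid.closure B : Set M)

def IsSemilinear (R : Set M) : Prop :=
  ∃ S : Set (Set M), S.Finite ∧ (∀ L ∈ S, IsLinear L) ∧ R = ⋃₀ S

theorem isLinear_singleton (x : M) : IsLinear ({x} : Set M) :=
  ⟨x, ∅, finite_empty, by
    rw [Submonoid.closure_empty, Submonoid.coe_bot, singleton_mul_singleton, mul_one]⟩

theorem IsLinear.isSemilinear {L : Set M} (hL : IsLinear L) : IsSemilinear L :=
  ⟨{L}, finite_singleton L, fun _ h => (mem_singleton_iff.1 h) ▸ hL, (sUnion_singleton L).symm⟩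

theorem Set.Finite.isSemilinear {U : Set M} (hU : U.Finite) : IsSemilinear U :=
  ⟨(fun x => {x}) '' U, hU.image _, forall_mem_image.2 fun x _ => isLinear_singleton x,
    by rw [sUnion_image, biUnion_of_singleton]⟩

theorem IsSemilinear.union {U V : Set M} (hU : IsSemilinear U) (hV : IsSemilinear V) :
    IsSemilinear (U ∪ V) := by
  obtain ⟨S, hS, hSL, rfl⟩ := hU
  obtain ⟨T, hT, hTL, rfl⟩ := hV
  exact ⟨S ∪ T, hS.union hT, fun L hL => hL.elim (hSL L) (hTL L), (sUnion_union S T).symm⟩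

end Monoid

section CommMonoid

variable {M : Type*} [CommMonoid M]

theorem Submonoid.coe_closure_union (s t : Set M) :
    (Submonoid.closure (s ∪ t) : Set M) = Submonoid.closure s * Submonoid.closure t := by
  rw [Submonoid.closure_union, Submonoid.coe_sup]

theorem Submonoid.closure_singleton_mul_closure (x : M) (B : Set M) :
    (Submonoid.closure ({x} * (Submonoid.closure B : Set M)) : Set M) =
      {1} ∪ {x} * (Submonoid.closure (insert x B) : Set M) := by
  have hx : x ∈ Submonoid.closure ({x} * (Submonoid.closure B : Set M)) :=
    Submonoid.subset_closure ⟨x, rfl, 1, one_mem _, mul_one x⟩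
  apply Subset.antisymm
  · intro a ha
    induction ha using Submonoid.closure_induction with
    | mem a ha =>
      obtain ⟨x, rfl, b, hb, rfl⟩ := ha
      exact Or.inr ⟨x, rfl, b, Submonoid.closure_mono (subset_insert _ _) hb, rfl⟩
    | one => exact Or.inl rfl
    | mul _ _ _ _ iha ihb =>
      rcases iha with rfl | ⟨x, rfl, c, hc, rfl⟩
      · rwa [one_mul]
      rcases ihb with rfl | ⟨x, rfl, d, hd, rfl⟩
      · rw [mul_one]; exact Or.inr ⟨x, rfl, c, hc, rfl⟩
      have hx' := Submonoid.subset_closure (mem_insert x B)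
      refine Or.inr ⟨x, rfl, x * c * d, mul_mem (mul_mem hx' hc) hd, ?_⟩
      dsimp only
      ac_rfl
  · rintro _ (rfl | ⟨x, rfl, c, hc, rfl⟩)
    · exact one_mem _
    rw [insert_eq, Submonoid.coe_closure_union] at hc
    obtain ⟨_, hn, b, hb, rfl⟩ := hc
    obtain ⟨n, rfl⟩ := Submonoid.mem_closure_singleton.1 hn
    dsimp only
    rw [mul_left_comm, mul_comm (x ^ n)]
    exact mul_mem (Submonoid.subset_closure (mul_mem_mul rfl hb)) (pow_mem hx n)

theorem IsLinear.mul {U V : Set M} (hU : IsLinear U) (hV : IsLinear V) : IsLinear (U * V) := by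
  obtain ⟨x, B, hB, rfl⟩ := hU
  obtain ⟨y, C, hC, rfl⟩ := hV
  refine ⟨x * y, B ∪ C, hB.union hC, ?_⟩
  rw [mul_mul_mul_comm, singleton_mul_singleton, Submonoid.coe_closure_union]

theorem IsSemilinear.mul {U V : Set M} (hU : IsSemilinear U) (hV : IsSemilinear V) :
    IsSemilinear (U * V) := by
  obtain ⟨S, hS, hSL, rfl⟩ := hU
  obtain ⟨T, hT, hTL, rfl⟩ := hV
  refine ⟨S * T, hS.mul hT, ?_, ?_⟩
  · rintro _ ⟨L, hL, L', hL', rfl⟩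
    exact (hSL L hL).mul (hTL L' hL')
  · rw [sUnion_mul, ← image2_mul, sUnion_image2]
    simp_rw [mul_sUnion]

theorem IsLinear.isSemilinear_closure {L : Set M} (hL : IsLinear L) :
    IsSemilinear (Submonoid.closure L : Set M) := by
  obtain ⟨x, B, hB, rfl⟩ := hL
  rw [Submonoid.closure_singleton_mul_closure]
  have hL : IsLinear ({x} * (Submonoid.closure (insert x B) : Set M)) :=
    ⟨x, insert x B, hB.insert x, rfl⟩
  exact (isLinear_singleton 1).isSemilinear.union hL.isSemilinear

theorem IsSemilinear.closure {R : Set M} (hR : IsSemilinear R) :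
    IsSemilinear (Submonoid.closure R : Set M) := by
  obtain ⟨S, hS, hSL, rfl⟩ := hR
  induction S, hS using Set.Finite.induction_on with
  | empty =>
    rw [sUnion_empty, Submonoid.closure_empty, Submonoid.coe_bot]
    exact (isLinear_singleton 1).isSemilinear
  | insert _ _ ih =>
    rw [sUnion_insert, Submonoid.coe_closure_union]
    exact (hSL _ (mem_insert _ _)).isSemilinear_closure.mul
      (ih fun L hL => hSL L (mem_insert_of_mem _ hL))

theorem IsRational.isSemilinear {R : Set M} (hR : IsRational R) : IsSemilinear R := by
  induction hR with
  | finite U hU => exact hU.isSemilinear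
  | union _ _ _ _ ihU ihV => exact ihU.union ihV
  | mul _ _ _ _ ihU ihV => exact ihU.mul ihV
  | star _ _ ih => exact ih.closure

end CommMonoid

/-- in a commutative monoid, every rational subset is semilinear,
i.e. a finite union of sets of the form `{x} · B*` with `B` finite. -/
theorem rational_is_semilinear {M : Type*} [CommMonoid M] (R : Set M)
    (hR : IsRational R) :
    ∃ (k : ℕ) (x : Fin k → M) (B : Fin k → Set M),
      (∀ i, (B i).Finite) ∧
      R = ⋃ i, {x i} * (Submonoid.closure (B i) : Set M) := by
  obtain ⟨S, hS, hSL, rfl⟩ := hR.isSemilinear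
  obtain ⟨k, L, -, rfl⟩ := hS.fin_param
  choose x B hB hL using fun i => hSL (L i) (mem_range_self i)
  exact ⟨k, x, B, hB, by rw [sUnion_range]; exact iUnion_congr hL⟩
end

section
/- In the monoid ((ℤ ∪ {±∞})^n, +), a subset R is rational if and only if it can be written as a finite union of sets of the form {a} + {r₁, …, r_k}*, where a ∈ (ℤ ∪ {±∞})^n and r₁, …, r_k are vectors with all coordinates finite (in ℤ^n). -/
open scoped Pointwise

/-- `ℤ ∪ {±∞}`, a commutative monoid under addition with `−∞` absorbing
(and `+∞ + x = +∞` for `x ≠ −∞`). -/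
abbrev ZInf : Type := WithBot (WithTop ℤ)

/-- Rational subsets of an additive monoid. -/
inductive IsRatAdd {M : Type*} [AddMonoid M] : Set M → Prop
  | finite (U : Set M) : U.Finite → IsRatAdd U
  | union (U V : Set M) : IsRatAdd U → IsRatAdd V → IsRatAdd (U ∪ V)
  | add (U V : Set M) : IsRatAdd U → IsRatAdd V → IsRatAdd (U + V)
  | star (U : Set M) : IsRatAdd U → IsRatAdd (AddSubmonoid.closure U : Set M)

/-- A vector of `(ℤ ∪ {±∞})^n` has all coordinates finite. -/
def AllFinite {n : ℕ} (x : Fin n → ZInf) : Prop :=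
  ∀ j, ∃ m : ℤ, x j = ((m : WithTop ℤ) : ZInf)

open AddSubmonoid

section Aux
variable {M : Type*} [AddCommMonoid M]

lemma closure_union_set' (A B : Set M) :
    (closure (A ∪ B) : Set M) = (closure A : Set M) + (closure B : Set M) := by
  ext x
  rw [Set.mem_add, SetLike.mem_coe, AddSubmonoid.closure_union, AddSubmonoid.mem_sup]
  simp only [SetLike.mem_coe]

lemma mem_closure_biUnion' {ι : Type*} [DecidableEq ι] (S : Finset ι) (C : ι → Set M) (x : M) :
    x ∈ closure (⋃ i ∈ S, C i) ↔
      ∃ g : ι → M, (∀ i ∈ S, g i ∈ closure (C i)) ∧ x = ∑ i ∈ S, g i := by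
  constructor
  · intro hx
    induction hx using closure_induction with
    | mem y hy =>
      simp only [Set.mem_iUnion] at hy
      obtain ⟨i₀, hi₀, hyC⟩ := hy
      refine ⟨fun i => if i = i₀ then y else 0, ?_, ?_⟩
      · intro i hi
        by_cases h : i = i₀
        · subst h; simpa using subset_closure hyC
        · simp [h, zero_mem]
      · rw [Finset.sum_ite_eq' S i₀ fun _ => y, if_pos hi₀]
    | zero => exact ⟨0, fun i _ => zero_mem _, by simp⟩
    | add y z hy hz ihy ihz =>
      obtain ⟨g₁, hg₁, rfl⟩ := ihy
      obtain ⟨g₂, hg₂, rfl⟩ := ihz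
      exact ⟨g₁ + g₂, fun i hi => add_mem (hg₁ i hi) (hg₂ i hi),
        (Finset.sum_add_distrib).symm⟩
  · rintro ⟨g, hg, rfl⟩
    exact sum_mem fun i hi =>
      closure_mono (Set.subset_biUnion_of_mem (u := C) hi) (hg i hi)

lemma add_nsmul_self' {a f : M} (h : a + a = a + f) : ∀ m : ℕ, a + m • f = (m + 1) • a := by
  intro m
  induction m with
  | zero => simp
  | succ m ih =>
    calc a + (m + 1) • f = (a + m • f) + f := by rw [succ_nsmul, add_assoc]
      _ = (m + 1) • a + f := by rw [ih]
      _ = m • a + (a + f) := by rw [succ_nsmul, add_assoc]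
      _ = m • a + (a + a) := by rw [h]
      _ = (m + 1 + 1) • a := by rw [← add_assoc, ← succ_nsmul, ← succ_nsmul]

lemma sum_sum_eq' {ι : Type*} [DecidableEq ι] (a f : ι → M)
    (hf : ∀ i, a i + a i = a i + f i) (S S' : Finset ι) :
    ∑ i ∈ S, a i + ∑ i ∈ S', a i = ∑ i ∈ S ∪ S', a i + ∑ i ∈ S ∩ S', f i := by
  rw [← Finset.sum_union_inter (s₁ := S) (s₂ := S')]
  have hsub : S ∩ S' ⊆ S ∪ S' := Finset.inter_subset_left.trans Finset.subset_union_left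
  rw [← Finset.sum_sdiff hsub (f := a), add_assoc, add_assoc, ← Finset.sum_add_distrib,
    ← Finset.sum_add_distrib]
  congr 1
  exact Finset.sum_congr rfl fun i _ => hf i

lemma translate_mem' {a f : M} (h : a + a = a + f) {B : Set M} {G : Set M}
    (haG : {a} + (closure B : Set M) ⊆ G) {g : M} (hg : g ∈ closure ({f} ∪ B)) :
    a + g ∈ closure G := by
  have hg' : g ∈ (closure ({f} ∪ B) : Set M) := hg
  rw [closure_union_set'] at hg'
  obtain ⟨u, hu, b, hb, rfl⟩ := hg'
  rw [SetLike.mem_coe, AddSubmonoid.mem_closure_singleton] at hu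
  obtain ⟨m, rfl⟩ := hu
  have hab : a + b ∈ G := haG ⟨a, rfl, b, hb, rfl⟩
  have ha : a ∈ G := by
    have := haG ⟨a, rfl, 0, ?_, add_zero a⟩
    · exact this
    · exact zero_mem (closure B)
  have heq : a + (m • f + b) = m • a + (a + b) := by
    rw [← add_assoc, add_nsmul_self' h m, succ_nsmul, add_assoc]
  rw [heq]
  exact add_mem (nsmul_mem (subset_closure ha) m) (subset_closure hab)

lemma star_closure_eq' {ι : Type*} [DecidableEq ι] (a f : ι → M)
    (hf : ∀ i, a i + a i = a i + f i) (B : ι → Set M) :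
    (closure (⋃ i, ({a i} + (closure (B i) : Set M))) : Set M) =
      ⋃ S : Finset ι, ({∑ i ∈ S, a i} +
        (closure (⋃ i ∈ S, ({f i} ∪ B i)) : Set M)) := by
  have Dmono : ∀ {S S' : Finset ι}, S ⊆ S' →
      (⋃ i ∈ S, ({f i} ∪ B i)) ⊆ ⋃ i ∈ S', ({f i} ∪ B i) := by
    intro S S' h z hz
    simp only [Set.mem_iUnion] at hz ⊢
    obtain ⟨i, hi, h2⟩ := hz
    exact ⟨i, h hi, h2⟩
  apply Set.Subset.antisymm
  · intro x hx
    rw [SetLike.mem_coe] at hx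
    induction hx using closure_induction with
    | mem y hy =>
      simp only [Set.mem_iUnion] at hy
      obtain ⟨i, hy⟩ := hy
      obtain ⟨u, hu, b, hb, rfl⟩ := hy
      rw [Set.mem_singleton_iff] at hu; subst hu
      refine Set.mem_iUnion.2 ⟨{i}, ⟨a i, by simp, b, ?_, rfl⟩⟩
      refine SetLike.mem_coe.2 (closure_mono ?_ hb)
      intro z hz
      simp only [Finset.mem_singleton, Set.mem_iUnion]
      exact ⟨i, rfl, Or.inr hz⟩
    | zero =>
      refine Set.mem_iUnion.2 ⟨∅, ⟨0, by simp, 0, zero_mem _, add_zero 0⟩⟩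
    | add y z hy hz ihy ihz =>
      obtain ⟨S, hS⟩ := Set.mem_iUnion.1 ihy
      obtain ⟨u, hu, c, hc, rfl⟩ := hS
      rw [Set.mem_singleton_iff] at hu; subst hu
      obtain ⟨S', hS'⟩ := Set.mem_iUnion.1 ihz
      obtain ⟨u', hu', c', hc', rfl⟩ := hS'
      rw [Set.mem_singleton_iff] at hu'; subst hu'
      refine Set.mem_iUnion.2 ⟨S ∪ S', ⟨∑ i ∈ S ∪ S', a i, rfl,
        ((∑ i ∈ S ∩ S', f i) + c) + c', ?_, ?_⟩⟩
      · refine SetLike.mem_coe.2 (add_mem (add_mem ?_ ?_) ?_)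
        · refine sum_mem fun i hi => subset_closure ?_
          refine Set.mem_iUnion.2 ⟨i, Set.mem_iUnion.2
            ⟨(Finset.inter_subset_left.trans Finset.subset_union_left) hi, Or.inl rfl⟩⟩
        · exact closure_mono (Dmono Finset.subset_union_left) hc
        · exact closure_mono (Dmono Finset.subset_union_right) hc'
      · have h1 : ∑ i ∈ S ∪ S', a i + (((∑ i ∈ S ∩ S', f i) + c) + c') =
            ((∑ i ∈ S ∪ S', a i) + (∑ i ∈ S ∩ S', f i)) + (c + c') := by abel
        beta_reduce
        rw [h1, ← sum_sum_eq' a f hf S S']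
        abel
  · intro x hx
    obtain ⟨S, hS⟩ := Set.mem_iUnion.1 hx
    obtain ⟨u, hu, c, hc, rfl⟩ := hS
    rw [Set.mem_singleton_iff] at hu; subst hu
    obtain ⟨g, hg, rfl⟩ := (mem_closure_biUnion' S (fun i => {f i} ∪ B i) c).1 hc
    beta_reduce
    rw [← Finset.sum_add_distrib]
    exact SetLike.mem_coe.2 (sum_mem fun i hi => translate_mem' (hf i)
      (Set.subset_iUnion (fun i => {a i} + (closure (B i) : Set M)) i) (hg i hi))

lemma singleton_add_rearrange' (x y : M) (S T : Set M) :
    ({x} + S) + ({y} + T) = {x + y} + (S + T) := by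
  rw [← Set.singleton_add_singleton]
  exact add_add_add_comm _ _ _ _

end Aux

section RatAux
variable {M : Type*} [AddMonoid M]

lemma isRatAdd_iUnion_fin : ∀ {k : ℕ} (F : Fin k → Set M),
    (∀ i, IsRatAdd (F i)) → IsRatAdd (⋃ i, F i) := by
  intro k
  induction k with
  | zero => intro F _; simpa using IsRatAdd.finite ∅ Set.finite_empty
  | succ k ih =>
    intro F hF
    have h : (⋃ i, F i) = F 0 ∪ ⋃ i : Fin k, F i.succ := by
      ext x
      simp [Set.mem_iUnion, Fin.exists_fin_succ]
    rw [h]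
    exact IsRatAdd.union _ _ (hF 0) (ih _ fun i => hF i.succ)

end RatAux

open Classical in
/-- the finite part of a vector : infinite coordinates are replaced by `0`. -/
noncomputable def finpart {n : ℕ} (x : Fin n → ZInf) : Fin n → ZInf := fun j =>
  if h : ∃ m : ℤ, x j = ((m : WithTop ℤ) : ZInf) then x j else 0

lemma finpart_allFinite {n : ℕ} (x : Fin n → ZInf) : AllFinite (finpart x) := by
  intro j
  unfold finpart
  split_ifs with h
  · exact h
  · exact ⟨0, by simp⟩

lemma add_finpart {n : ℕ} (x : Fin n → ZInf) : x + x = x + finpart x := by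
  funext j
  simp only [Pi.add_apply, finpart]
  split_ifs with h
  · rfl
  · rcases hx : x j with _ | y
    · show (⊥ : ZInf) + ⊥ = ⊥ + 0
      simp
    · rcases y with _ | m
      · show ((⊤ : WithTop ℤ) : ZInf) + ((⊤ : WithTop ℤ) : ZInf) = ((⊤ : WithTop ℤ) : ZInf) + 0
        rw [← WithBot.coe_add, add_zero, top_add]
      · exact absurd ⟨m, hx.trans (show _ = ((m : WithTop ℤ) : ZInf) by norm_cast)⟩ h

lemma goodRep_reindex {n : ℕ} {ι : Type} [Fintype ι] (R : Set (Fin n → ZInf))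
    (a : ι → (Fin n → ZInf)) (B : ι → Set (Fin n → ZInf))
    (hB : ∀ i, (B i).Finite ∧ ∀ x ∈ B i, AllFinite x)
    (hR : R = ⋃ i, {a i} + (AddSubmonoid.closure (B i) : Set (Fin n → ZInf))) :
    ∃ (k : ℕ) (a' : Fin k → (Fin n → ZInf)) (B' : Fin k → Set (Fin n → ZInf)),
      (∀ i, (B' i).Finite ∧ ∀ x ∈ B' i, AllFinite x) ∧
      R = ⋃ i, {a' i} + (AddSubmonoid.closure (B' i) : Set (Fin n → ZInf)) := by
  set e := (Fintype.equivFin ι).symm with he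
  refine ⟨Fintype.card ι, a ∘ e, B ∘ e, fun i => hB (e i), ?_⟩
  rw [hR, ← e.surjective.iUnion_comp
    (fun i => {a i} + (AddSubmonoid.closure (B i) : Set (Fin n → ZInf)))]
  rfl

/-- a subset `R` of the monoid `((ℤ ∪ {±∞})^n, +)` is rational if
and only if it is a finite union of sets of the form `{a} + B*` where
`a ∈ (ℤ ∪ {±∞})^n` and `B` is a finite set of vectors all of whose coordinates
are finite (i.e. in `ℤ^n`). -/
theorem rational_iff_union_translate_finite_star {n : ℕ} (R : Set (Fin n → ZInf)) :
    IsRatAdd R ↔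
      ∃ (k : ℕ) (a : Fin k → (Fin n → ZInf)) (B : Fin k → Set (Fin n → ZInf)),
        (∀ i, (B i).Finite ∧ ∀ x ∈ B i, AllFinite x) ∧
        R = ⋃ i, {a i} + (AddSubmonoid.closure (B i) : Set (Fin n → ZInf)) := by
  constructor
  · intro h
    induction h with
    | finite U hU =>
      haveI := hU.fintype
      refine goodRep_reindex (ι := ↥U) U (fun x => (x : Fin n → ZInf)) (fun _ => ∅)
        (fun _ => ⟨Set.finite_empty, by simp⟩) ?_
      have h1 : ∀ x : ↥U, ({(x : Fin n → ZInf)} +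
          (AddSubmonoid.closure (∅ : Set (Fin n → ZInf)) : Set (Fin n → ZInf))) = {(x : Fin n → ZInf)} := by
        intro x
        rw [AddSubmonoid.closure_empty, AddSubmonoid.coe_bot, Set.singleton_add_singleton,
          add_zero]
      simp only [h1]
      exact (Set.iUnion_of_singleton_coe U).symm
    | union U V hU hV ihU ihV =>
      obtain ⟨k₁, a₁, B₁, h₁, rfl⟩ := ihU
      obtain ⟨k₂, a₂, B₂, h₂, rfl⟩ := ihV
      refine goodRep_reindex (ι := Fin k₁ ⊕ Fin k₂) _ (Sum.elim a₁ a₂) (Sum.elim B₁ B₂)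
        ?_ ?_
      · rintro (i | i)
        exacts [h₁ i, h₂ i]
      · rw [Set.iUnion_sum]
        rfl
    | add U V hU hV ihU ihV =>
      obtain ⟨k₁, a₁, B₁, h₁, rfl⟩ := ihU
      obtain ⟨k₂, a₂, B₂, h₂, rfl⟩ := ihV
      refine goodRep_reindex (ι := Fin k₁ × Fin k₂) _
        (fun p => a₁ p.1 + a₂ p.2) (fun p => B₁ p.1 ∪ B₂ p.2) ?_ ?_
      · intro p
        refine ⟨(h₁ p.1).1.union (h₂ p.2).1, ?_⟩
        rintro x (hx | hx)
        exacts [(h₁ p.1).2 x hx, (h₂ p.2).2 x hx]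
      · rw [Set.iUnion_add]
        rw [Set.iUnion_congr (fun i => Set.add_iUnion _ _)]
        have h3 : ∀ (i : Fin k₁) (j : Fin k₂),
            ({a₁ i} + (AddSubmonoid.closure (B₁ i) : Set (Fin n → ZInf))) +
              ({a₂ j} + (AddSubmonoid.closure (B₂ j) : Set (Fin n → ZInf))) =
            {a₁ i + a₂ j} + (AddSubmonoid.closure (B₁ i ∪ B₂ j) : Set (Fin n → ZInf)) :=
          fun i j => by rw [singleton_add_rearrange', ← closure_union_set']
        simp only [h3]
        exact (Set.iUnion_prod' fun p =>
          {a₁ p.1 + a₂ p.2} +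
            (AddSubmonoid.closure (B₁ p.1 ∪ B₂ p.2) : Set (Fin n → ZInf))).symm
    | star U hU ihU =>
      obtain ⟨k, a, B, hB, rfl⟩ := ihU
      refine goodRep_reindex (ι := Finset (Fin k)) _
        (fun S => ∑ i ∈ S, a i)
        (fun S => ⋃ i ∈ S, ({finpart (a i)} ∪ B i)) ?_ ?_
      · intro S
        constructor
        · refine Set.finite_iUnion fun i => Set.finite_iUnion fun _ => ?_
          exact (Set.finite_singleton _).union (hB i).1
        · intro x hx
          simp only [Set.mem_iUnion] at hx
          obtain ⟨i, _, hx | hx⟩ := hx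
          · rw [Set.mem_singleton_iff] at hx
            subst hx
            exact finpart_allFinite (a i)
          · exact (hB i).2 x hx
      · exact star_closure_eq' a (fun i => finpart (a i)) (fun i => add_finpart (a i)) B
  · rintro ⟨k, a, B, hB, rfl⟩
    refine isRatAdd_iUnion_fin _ fun i => ?_
    exact IsRatAdd.add _ _ (IsRatAdd.finite _ (Set.finite_singleton _))
      (IsRatAdd.star _ (IsRatAdd.finite _ (hB i).1))
end

section
/- Irrationality of a projected span: let α be a positive irrational real, u = (1, −α) and v = (−α⁻¹, 1) in ℝ², and let R = {u, v}* \ {(0,0)} (all sums h₁u + h₂v with h₁, h₂ ∈ ℕ, h₁ + h₂ ≥ 1). Then the set A(R) = {max(h₁ − α⁻¹h₂, h₂ − αh₁) : h₁, h₂ ∈ ℕ, h₁ + h₂ ≥ 1} ⊆ ℝ has infimum 0, and this infimum is not attained. -/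
/-- irrationality of a projected span: let `α > 0` be irrational.
The set `A(R) = {max (h₁ − α⁻¹·h₂) (h₂ − α·h₁) : h₁, h₂ ∈ ℕ, h₁ + h₂ ≥ 1} ⊆ ℝ`
has infimum `0`, and this infimum is not attained. -/
theorem projected_span_inf_not_attained (α : ℝ) (hα : Irrational α) (hpos : 0 < α) :
    IsGLB {x : ℝ | ∃ h₁ h₂ : ℕ, 1 ≤ h₁ + h₂ ∧
        x = max ((h₁ : ℝ) - α⁻¹ * h₂) ((h₂ : ℝ) - α * h₁)} 0 ∧
      (0 : ℝ) ∉ {x : ℝ | ∃ h₁ h₂ : ℕ, 1 ≤ h₁ + h₂ ∧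
        x = max ((h₁ : ℝ) - α⁻¹ * h₂) ((h₂ : ℝ) - α * h₁)} := by
  set S : Set ℝ := {x : ℝ | ∃ h₁ h₂ : ℕ, 1 ≤ h₁ + h₂ ∧
      x = max ((h₁ : ℝ) - α⁻¹ * h₂) ((h₂ : ℝ) - α * h₁)} with hS
  have hαne : α ≠ 0 := ne_of_gt hpos
  -- every element of S is strictly positive
  have posS : ∀ x ∈ S, 0 < x := by
    rintro x ⟨h₁, h₂, hsum, rfl⟩
    set t : ℝ := (h₁ : ℝ) - α⁻¹ * h₂ with ht
    have hneg : ((h₂ : ℝ) - α * h₁) = -α * t := by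
      rw [ht, mul_sub, ← mul_assoc, neg_mul α α⁻¹, mul_inv_cancel₀ hαne]; ring
    have htne : t ≠ 0 := by
      intro h0
      have hα1 : α * h₁ = h₂ := by
        have : (h₁ : ℝ) = α⁻¹ * h₂ := by linarith [sub_eq_zero.mp h0]
        field_simp at this
        linarith [this]
      rcases Nat.eq_zero_or_pos h₁ with h | h
      · subst h
        have hh2 : (h₂ : ℝ) = 0 := by rw [← hα1]; simp
        have : h₂ = 0 := by exact_mod_cast hh2
        omega
      · have : α = ((h₂ : ℚ) / (h₁ : ℚ) : ℚ) := by
          push_cast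
          field_simp
          linarith [hα1]
        exact hα.ne_rat _ this
    rcases lt_or_gt_of_ne htne with hlt | hgt
    · rw [hneg]
      have : 0 < -α * t := by nlinarith
      exact lt_max_of_lt_right this
    · exact lt_max_of_lt_left hgt
  -- arbitrarily small elements
  have approx : ∀ ε : ℝ, 0 < ε → ∃ x ∈ S, x < ε := by
    intro ε hε
    set M : ℝ := max 1 α⁻¹ with hM
    have hM0 : 0 < M := lt_of_lt_of_le one_pos (le_max_left _ _)
    obtain ⟨m, hm⟩ := exists_nat_one_div_lt (show (0:ℝ) < ε / M / 2 by positivity)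
    obtain ⟨j, k, hk0, hkm, hjk⟩ :=
      Real.exists_int_int_abs_mul_sub_le α (n := m + 1) (Nat.succ_pos m)
    have hd : |(k : ℝ) * α - j| < ε / M := by
      have h1 : (1 : ℝ) / (m + 1 + 1) ≤ 1 / (m + 1) := by
        apply one_div_le_one_div_of_le
        · positivity
        · linarith
      calc |(k : ℝ) * α - j| ≤ 1 / (↑(m + 1) + 1) := hjk
        _ ≤ 1 / (m + 1) := by push_cast; exact_mod_cast h1
        _ < ε / M / 2 := hm
        _ < ε / M := by
            have : 0 < ε / M := by positivity
            linarith
    have hdle : |(k : ℝ) * α - j| ≤ 1 / 2 := by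
      calc |(k : ℝ) * α - j| ≤ 1 / (↑(m + 1) + 1) := hjk
        _ ≤ 1 / 2 := by
          apply one_div_le_one_div_of_le (by norm_num)
          push_cast; linarith
    -- j ≥ 0
    have hj0 : 0 ≤ j := by
      by_contra hj
      push_neg at hj
      have hj1' : j ≤ -1 := by omega
      have hj1 : (j : ℝ) ≤ -1 := by exact_mod_cast hj1'
      have hk1' : (1 : ℤ) ≤ k := hk0
      have hk1 : (1 : ℝ) ≤ (k : ℝ) := by exact_mod_cast hk1'
      have hkα : 0 < (k : ℝ) * α := by nlinarith
      have : (1 : ℝ) < |(k : ℝ) * α - j| := by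
        rw [abs_of_pos (by nlinarith)]
        nlinarith
      linarith
    refine ⟨max ((k.toNat : ℝ) - α⁻¹ * j.toNat) ((j.toNat : ℝ) - α * k.toNat),
      ⟨k.toNat, j.toNat, ?_, rfl⟩, ?_⟩
    · have : 1 ≤ k.toNat := by omega
      omega
    · have hkc : (k.toNat : ℝ) = (k : ℝ) := by
        exact_mod_cast Int.toNat_of_nonneg hk0.le
      have hjc : (j.toNat : ℝ) = (j : ℝ) := by
        exact_mod_cast Int.toNat_of_nonneg hj0
      rw [hkc, hjc]
      have e1 : (k : ℝ) - α⁻¹ * j = ((k : ℝ) * α - j) * α⁻¹ := by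
        field_simp
      have e2 : (j : ℝ) - α * k = -((k : ℝ) * α - j) := by ring
      have hb1 : (k : ℝ) - α⁻¹ * j < ε := by
        rw [e1]
        calc ((k : ℝ) * α - j) * α⁻¹ ≤ |(k : ℝ) * α - j| * α⁻¹ := by
              apply mul_le_mul_of_nonneg_right (le_abs_self _) (by positivity)
          _ ≤ |(k : ℝ) * α - j| * M := by
              apply mul_le_mul_of_nonneg_left (le_max_right _ _) (abs_nonneg _)
          _ < (ε / M) * M := by
              apply mul_lt_mul_of_pos_right hd hM0
          _ = ε := by field_simp
      have hb2 : (j : ℝ) - α * k < ε := by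
        rw [e2]
        calc -((k : ℝ) * α - j) ≤ |(k : ℝ) * α - j| := neg_le_abs _
          _ = |(k : ℝ) * α - j| * 1 := by ring
          _ ≤ |(k : ℝ) * α - j| * M := by
              apply mul_le_mul_of_nonneg_left (le_max_left _ _) (abs_nonneg _)
          _ < (ε / M) * M := mul_lt_mul_of_pos_right hd hM0
          _ = ε := by field_simp
      exact max_lt hb1 hb2
  refine ⟨⟨fun x hx => (posS x hx).le, fun b hb => ?_⟩, fun h => lt_irrefl 0 (posS 0 h)⟩
  by_contra hb0
  push_neg at hb0
  obtain ⟨x, hxS, hxb⟩ := approx b hb0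
  exact absurd (hb hxS) (not_le.mpr hxb)
end

section
/- If R is a rational subset of (ℤ², +) and γ_R(n) = sup{k ∈ ℤ : (n,k) ∈ R}, then the restriction of γ_R to its support {n : ∃k, (n,k) ∈ R} is bounded below by an affine function as n → ∞; in particular there exist constants c, d ∈ ℤ and N such that for all n ≥ N in the support, γ_R(n) ≥ cn + d. Consequently no rational subset E of (ℤ²,+) can satisfy γ_E(n) = −(n² + n)/2 for all n ∈ ℕ with full support on ℕ. -/
open scoped Pointwise

abbrev Z2 := ℤ × ℤ

def Lin (a : Z2) (B : Finset Z2) : Set Z2 :=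
  {a} + (AddSubmonoid.closure (B : Set Z2) : Set Z2)

def IsSemi (R : Set Z2) : Prop :=
  ∃ L : Finset (Z2 × Finset Z2), R = ⋃ p ∈ L, Lin p.1 p.2

lemma mem_Lin {a : Z2} {B : Finset Z2} {x : Z2} :
    x ∈ Lin a B ↔ ∃ y ∈ AddSubmonoid.closure (B : Set Z2), x = a + y := by
  simp only [Lin, Set.mem_add, Set.mem_singleton_iff]
  constructor
  · rintro ⟨u, rfl, v, hv, rfl⟩; exact ⟨v, hv, rfl⟩
  · rintro ⟨y, hy, rfl⟩; exact ⟨a, rfl, y, hy, rfl⟩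

lemma Lin_add_Lin (a c : Z2) (B D : Finset Z2) :
    Lin a B + Lin c D = Lin (a + c) (B ∪ D) := by
  ext x
  simp only [Set.mem_add, mem_Lin]
  constructor
  · rintro ⟨u, ⟨y, hy, rfl⟩, v, ⟨z, hz, rfl⟩, rfl⟩
    refine ⟨y + z, ?_, by ring⟩
    rw [Finset.coe_union, AddSubmonoid.closure_union]
    exact add_mem (AddSubmonoid.mem_sup_left hy) (AddSubmonoid.mem_sup_right hz)
  · rintro ⟨y, hy, rfl⟩
    rw [Finset.coe_union, AddSubmonoid.closure_union, AddSubmonoid.mem_sup] at hy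
    obtain ⟨u, hu, v, hv, rfl⟩ := hy
    exact ⟨a + u, ⟨u, hu, rfl⟩, c + v, ⟨v, hv, rfl⟩, by ring⟩

lemma isSemi_union {U V : Set Z2} (hU : IsSemi U) (hV : IsSemi V) : IsSemi (U ∪ V) := by
  obtain ⟨L, rfl⟩ := hU; obtain ⟨K, rfl⟩ := hV
  exact ⟨L ∪ K, by rw [Finset.set_biUnion_union]⟩

lemma isSemi_finite {U : Set Z2} (hU : U.Finite) : IsSemi U := by
  refine ⟨hU.toFinset.image (fun x => (x, (∅ : Finset Z2))), ?_⟩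
  ext x
  simp only [Set.mem_iUnion, Finset.mem_image, mem_Lin]
  constructor
  · intro hx
    exact ⟨(x, ∅), ⟨x, hU.mem_toFinset.2 hx, rfl⟩, 0, zero_mem _, by simp⟩
  · rintro ⟨p, ⟨y, hy, rfl⟩, z, hz, rfl⟩
    simp only [Finset.coe_empty, AddSubmonoid.closure_empty, AddSubmonoid.mem_bot] at hz
    subst hz
    simpa using hU.mem_toFinset.1 hy

lemma isSemi_add {U V : Set Z2} (hU : IsSemi U) (hV : IsSemi V) : IsSemi (U + V) := by
  obtain ⟨L, rfl⟩ := hU; obtain ⟨K, rfl⟩ := hV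
  refine ⟨(L ×ˢ K).image (fun p => (p.1.1 + p.2.1, p.1.2 ∪ p.2.2)), ?_⟩
  ext x
  simp only [Set.mem_add, Set.mem_iUnion, Finset.mem_image, Finset.mem_product]
  constructor
  · rintro ⟨u, ⟨p, hp, hu⟩, v, ⟨q, hq, hv⟩, rfl⟩
    refine ⟨(p.1 + q.1, p.2 ∪ q.2), ⟨(p, q), ⟨hp, hq⟩, rfl⟩, ?_⟩
    rw [← Lin_add_Lin]
    exact ⟨u, hu, v, hv, rfl⟩
  · rintro ⟨r, ⟨⟨p, q⟩, ⟨hp, hq⟩, rfl⟩, hx⟩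
    rw [← Lin_add_Lin] at hx
    obtain ⟨u, hu, v, hv, rfl⟩ := hx
    exact ⟨u, ⟨p, hp, hu⟩, v, ⟨q, hq, hv⟩, rfl⟩

lemma isSemi_Lin (a : Z2) (B : Finset Z2) : IsSemi (Lin a B) :=
  ⟨{(a, B)}, by simp⟩

lemma Lin_zero_empty : Lin (0 : Z2) ∅ = {0} := by
  ext x
  simp [mem_Lin]

lemma coe_closure_union (U V : Set Z2) :
    (AddSubmonoid.closure (U ∪ V) : Set Z2) =
      (AddSubmonoid.closure U : Set Z2) + (AddSubmonoid.closure V : Set Z2) := by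
  ext x
  rw [AddSubmonoid.closure_union]
  simp only [SetLike.mem_coe, AddSubmonoid.mem_sup, Set.mem_add]

lemma closure_Lin (a : Z2) (B : Finset Z2) :
    (AddSubmonoid.closure (Lin a B) : Set Z2) = {0} ∪ Lin a (insert a B) := by
  have haB : a ∈ Lin a B := mem_Lin.2 ⟨0, zero_mem _, (add_zero a).symm⟩
  apply le_antisymm
  · set S : AddSubmonoid Z2 :=
      { carrier := {0} ∪ Lin a (insert a B)
        zero_mem' := Or.inl rfl
        add_mem' := by
          rintro x y (rfl | hx) hy
          · simpa using hy
          · rcases hy with rfl | hy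
            · simpa using Or.inr hx
            · obtain ⟨u, hu, rfl⟩ := mem_Lin.1 hx
              obtain ⟨v, hv, rfl⟩ := mem_Lin.1 hy
              refine Or.inr (mem_Lin.2 ⟨u + (a + v), ?_, by ring⟩)
              have ha : a ∈ AddSubmonoid.closure ((insert a B : Finset Z2) : Set Z2) :=
                AddSubmonoid.subset_closure (by simp)
              exact add_mem hu (add_mem ha hv) } with hS
    have : Lin a B ⊆ S := by
      intro x hx
      obtain ⟨y, hy, rfl⟩ := mem_Lin.1 hx
      refine Or.inr (mem_Lin.2 ⟨y, ?_, rfl⟩)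
      exact AddSubmonoid.closure_mono (by simp [Finset.coe_subset]) hy
    exact AddSubmonoid.closure_le.2 this
  · rintro x (rfl | hx)
    · exact zero_mem _
    obtain ⟨y, hy, rfl⟩ := mem_Lin.1 hx
    obtain ⟨l, hl, rfl⟩ := AddSubmonoid.exists_multiset_of_mem_closure hy
    have key : ∀ e ∈ Multiset.filter (fun e => ¬ e = a) l, e ∈ (B : Set Z2) := by
      intro e he
      rw [Multiset.mem_filter] at he
      have := hl e he.1
      simp only [Finset.coe_insert, Set.mem_insert_iff] at this
      rcases this with rfl | h
      · exact absurd rfl he.2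
      · exact h
    have hb : (Multiset.filter (fun e => ¬ e = a) l).sum ∈
        AddSubmonoid.closure (B : Set Z2) :=
      AddSubmonoid.multiset_sum_mem _ _ (fun e he => AddSubmonoid.subset_closure (key e he))
    have hA : a + (Multiset.filter (fun e => ¬ e = a) l).sum ∈
        AddSubmonoid.closure (Lin a B) :=
      AddSubmonoid.subset_closure (mem_Lin.2 ⟨_, hb, rfl⟩)
    have haC : (Multiset.filter (fun e => e = a) l).sum ∈
        AddSubmonoid.closure (Lin a B) := by
      refine AddSubmonoid.multiset_sum_mem _ _ (fun e he => ?_)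
      rw [Multiset.mem_filter] at he
      rw [he.2]
      exact AddSubmonoid.subset_closure haB
    have hsum : l.sum = (Multiset.filter (fun e => e = a) l).sum
        + (Multiset.filter (fun e => ¬ e = a) l).sum := by
      conv_lhs => rw [← Multiset.filter_add_not (fun e => e = a) l]
      rw [Multiset.sum_add]
    rw [hsum]
    have : a + ((Multiset.filter (fun e => e = a) l).sum
        + (Multiset.filter (fun e => ¬ e = a) l).sum)
        = (a + (Multiset.filter (fun e => ¬ e = a) l).sum)
          + (Multiset.filter (fun e => e = a) l).sum := by ring
    rw [this]
    exact add_mem hA haC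

lemma isSemi_closure {U : Set Z2} (hU : IsSemi U) :
    IsSemi (AddSubmonoid.closure U : Set Z2) := by
  obtain ⟨L, rfl⟩ := hU
  induction L using Finset.induction_on with
  | empty =>
    simp only [Finset.notMem_empty, Set.iUnion_of_empty, Set.iUnion_empty,
      AddSubmonoid.closure_empty, AddSubmonoid.coe_bot]
    exact ⟨{((0 : Z2), (∅ : Finset Z2))}, by simp [Lin_zero_empty]⟩
  | @insert q L hq ih =>
    rw [Finset.set_biUnion_insert, coe_closure_union]
    refine isSemi_add ?_ ih
    rw [closure_Lin, ← Lin_zero_empty]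
    exact isSemi_union (isSemi_Lin _ _) (isSemi_Lin _ _)

lemma isSemi_of_isRatAdd {R : Set Z2} (h : IsRatAdd R) : IsSemi R := by
  induction h with
  | finite U hf => exact isSemi_finite hf
  | union U V _ _ ih1 ih2 => exact isSemi_union ih1 ih2
  | add U V _ _ ih1 ih2 => exact isSemi_add ih1 ih2
  | star U _ ih => exact isSemi_closure ih

lemma closure_bound (B : Finset Z2) :
    ∃ c d N : ℤ, ∀ m : ℤ, N ≤ m → (∃ k : ℤ, (m, k) ∈ AddSubmonoid.closure (B : Set Z2)) →
      ∃ k : ℤ, (m, k) ∈ AddSubmonoid.closure (B : Set Z2) ∧ c * m + d ≤ k := by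
  classical
  by_cases hP : ∃ p ∈ B, 0 < p.1
  · obtain ⟨p, hpB, hp1⟩ := hP
    set P := p.1 with hPdef
    set C := AddSubmonoid.closure (B : Set Z2) with hCdef
    let g : ℤ → Z2 := fun j =>
      if h : ∃ x : Z2, x ∈ C ∧ x.1 % P = j then h.choose else 0
    have hg : ∀ j : ℤ, (∃ x : Z2, x ∈ C ∧ x.1 % P = j) →
        g j ∈ C ∧ (g j).1 % P = j := by
      intro j h
      simp only [g, dif_pos h]
      exact h.choose_spec
    set c : ℤ := min p.2 0 with hc
    refine ⟨c, -∑ j ∈ Finset.range P.toNat, |(g (j : ℤ)).2 - c * (g (j : ℤ)).1|,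
      ∑ j ∈ Finset.range P.toNat, |(g (j : ℤ)).1|, ?_⟩
    rintro m hm ⟨k0, hk0⟩
    set j : ℤ := m % P with hj
    have hjex : ∃ x : Z2, x ∈ C ∧ x.1 % P = j := ⟨(m, k0), hk0, rfl⟩
    obtain ⟨hgC, hgmod⟩ := hg j hjex
    set x := g j with hx
    -- j.toNat is in range P.toNat
    have hj0 : 0 ≤ j := Int.emod_nonneg m (by omega)
    have hjP : j < P := Int.emod_lt_of_pos m hp1
    have hjmem : j.toNat ∈ Finset.range P.toNat := by
      rw [Finset.mem_range]; omega
    have hjcast : ((j.toNat : ℤ)) = j := Int.toNat_of_nonneg hj0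
    -- bounds from the sums
    have habs1 : |x.1| ≤ ∑ j ∈ Finset.range P.toNat, |(g (j : ℤ)).1| := by
      have h := Finset.single_le_sum (f := fun j : ℕ => |(g (j : ℤ)).1|)
        (fun i _ => abs_nonneg _) hjmem
      simp only [hjcast] at h
      exact h
    have habs2 : |x.2 - c * x.1| ≤
        ∑ j ∈ Finset.range P.toNat, |(g (j : ℤ)).2 - c * (g (j : ℤ)).1| := by
      have h := Finset.single_le_sum (f := fun j : ℕ => |(g (j : ℤ)).2 - c * (g (j : ℤ)).1|)
        (fun i _ => abs_nonneg _) hjmem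
      simp only [hjcast] at h
      exact h
    have hx1m : x.1 ≤ m := by
      have : x.1 ≤ |x.1| := le_abs_self _
      omega
    -- divisibility
    have hdvd : P ∣ m - x.1 := by
      apply Int.dvd_of_emod_eq_zero
      rw [Int.sub_emod, hgmod, ← hj, sub_self, Int.zero_emod]
    set t : ℤ := (m - x.1) / P with ht
    have htP : t * P = m - x.1 := Int.ediv_mul_cancel hdvd
    have ht0 : 0 ≤ t := Int.ediv_nonneg (by omega) (by omega)
    have htle : t ≤ m - x.1 := Int.ediv_le_self _ (by omega)
    -- the witness
    refine ⟨x.2 + t * p.2, ?_, ?_⟩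
    · have hmem : x + t.toNat • p ∈ C :=
        add_mem hgC (C.nsmul_mem (SetLike.mem_coe.1 (AddSubmonoid.subset_closure (Finset.mem_coe.2 hpB))) t.toNat)
      have : x + t.toNat • p = (m, x.2 + t * p.2) := by
        have h1 : (t.toNat : ℤ) = t := Int.toNat_of_nonneg ht0
        have : t.toNat • p = ((t : ℤ) * p.1, (t : ℤ) * p.2) := by
          rw [Prod.smul_def]
          simp [nsmul_eq_mul, h1]
        rw [this]
        have : x.1 + t * p.1 = m := by rw [← hPdef]; omega
        ext <;> simp [this]
      rwa [this] at hmem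
    · have h1 : c ≤ p.2 := min_le_left _ _
      have h2 : c ≤ 0 := min_le_right _ _
      have h3 : t * c ≤ t * p.2 := mul_le_mul_of_nonneg_left h1 ht0
      have h4 : (m - x.1) * c ≤ t * c := mul_le_mul_of_nonpos_right htle h2
      have h5 : -(x.2 - c * x.1) ≤ |x.2 - c * x.1| := neg_le_abs _
      nlinarith [h3, h4, habs2, h5]
  · push_neg at hP
    refine ⟨0, 0, 1, ?_⟩
    rintro m hm ⟨k0, hk0⟩
    exfalso
    have : ∀ x : Z2, x ∈ AddSubmonoid.closure (B : Set Z2) → x.1 ≤ 0 := by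
      intro x hx
      induction hx using AddSubmonoid.closure_induction with
      | mem y hy => exact hP y hy
      | zero => simp
      | add y z _ _ hy hz => simpa using add_le_add hy hz
    have := this (m, k0) hk0
    simp at this
    omega

lemma mem_Lin_iff (a : Z2) (B : Finset Z2) (n k : ℤ) :
    (n, k) ∈ Lin a B ↔ (n - a.1, k - a.2) ∈ AddSubmonoid.closure (B : Set Z2) := by
  rw [mem_Lin]
  constructor
  · rintro ⟨y, hy, h⟩
    have h1 : n = a.1 + y.1 := congrArg Prod.fst h
    have h2 : k = a.2 + y.2 := congrArg Prod.snd h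
    have : (n - a.1, k - a.2) = y := by
      ext <;> simp [h1, h2]
    rw [this]; exact hy
  · intro hy
    exact ⟨(n - a.1, k - a.2), hy, by ext <;> simp⟩

lemma lin_bound (a : Z2) (B : Finset Z2) :
    ∃ c d N : ℤ, ∀ n : ℤ, N ≤ n → (∃ k : ℤ, (n, k) ∈ Lin a B) →
      ∃ k : ℤ, (n, k) ∈ Lin a B ∧ c * n + d ≤ k := by
  obtain ⟨c, d, N, h⟩ := closure_bound B
  refine ⟨c, d - c * a.1 + a.2, N + a.1, ?_⟩
  rintro n hn ⟨k0, hk0⟩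
  rw [mem_Lin_iff] at hk0
  obtain ⟨k, hk, hkb⟩ := h (n - a.1) (by omega) ⟨k0 - a.2, hk0⟩
  refine ⟨k + a.2, ?_, by linarith⟩
  rw [mem_Lin_iff]
  simpa using hk

lemma semi_bound (L : Finset (Z2 × Finset Z2)) :
    ∃ c d N : ℤ, ∀ n : ℤ, N ≤ n → (∃ k : ℤ, (n, k) ∈ ⋃ p ∈ L, Lin p.1 p.2) →
      ∃ k : ℤ, (n, k) ∈ (⋃ p ∈ L, Lin p.1 p.2) ∧ c * n + d ≤ k := by
  classical
  induction L using Finset.induction_on with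
  | empty => exact ⟨0, 0, 0, by simp⟩
  | @insert q L hq ih =>
    obtain ⟨c2, d2, N2, h2⟩ := ih
    obtain ⟨c1, d1, N1, h1⟩ := lin_bound q.1 q.2
    refine ⟨min c1 c2, min d1 d2, max (max N1 N2) 0, ?_⟩
    rintro n hn ⟨k0, hk0⟩
    rw [Finset.set_biUnion_insert] at hk0
    have hn0 : 0 ≤ n := le_trans (le_max_right _ _) hn
    have hcn1 : min c1 c2 * n + min d1 d2 ≤ c1 * n + d1 := by
      have := mul_le_mul_of_nonneg_right (min_le_left c1 c2) hn0
      have := min_le_left d1 d2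
      omega
    have hcn2 : min c1 c2 * n + min d1 d2 ≤ c2 * n + d2 := by
      have := mul_le_mul_of_nonneg_right (min_le_right c1 c2) hn0
      have := min_le_right d1 d2
      omega
    rcases hk0 with hk0 | hk0
    · obtain ⟨k, hk, hkb⟩ := h1 n (by omega) ⟨k0, hk0⟩
      exact ⟨k, by rw [Finset.set_biUnion_insert]; exact Or.inl hk, by omega⟩
    · obtain ⟨k, hk, hkb⟩ := h2 n (by omega) ⟨k0, hk0⟩
      exact ⟨k, by rw [Finset.set_biUnion_insert]; exact Or.inr hk, by omega⟩

/-- if `R` is a rational subset of `(ℤ², +)`, then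
`γ_R(n) = sup {k : (n,k) ∈ R}` restricted to the support of `γ_R` is bounded
below by an affine function for large `n`: there exist `c, d, N` such that for
all `n ≥ N` in the support there is `k` with `(n,k) ∈ R` and `k ≥ c·n + d`.
Consequently no rational subset `E` of `(ℤ², +)` can satisfy
`γ_E(n) = −(n² + n)/2` (attained) for all `n ∈ ℕ`. -/
theorem rational_subset_gamma_affine_lower_bound :
    (∀ R : Set (ℤ × ℤ), IsRatAdd R →
      ∃ c d N : ℤ, ∀ n : ℤ, N ≤ n → (∃ k : ℤ, (n, k) ∈ R) →
        ∃ k : ℤ, (n, k) ∈ R ∧ c * n + d ≤ k) ∧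
    ∀ E : Set (ℤ × ℤ), IsRatAdd E →
      ¬ (∀ n : ℕ, ((n : ℤ), -(((n : ℤ) ^ 2 + (n : ℤ)) / 2)) ∈ E ∧
          ∀ k : ℤ, ((n : ℤ), k) ∈ E → k ≤ -(((n : ℤ) ^ 2 + (n : ℤ)) / 2)) := by
  have main : ∀ R : Set (ℤ × ℤ), IsRatAdd R →
      ∃ c d N : ℤ, ∀ n : ℤ, N ≤ n → (∃ k : ℤ, (n, k) ∈ R) →
        ∃ k : ℤ, (n, k) ∈ R ∧ c * n + d ≤ k := by
    intro R hR
    obtain ⟨L, rfl⟩ := isSemi_of_isRatAdd hR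
    exact semi_bound L
  refine ⟨main, ?_⟩
  intro E hE hcontra
  obtain ⟨c, d, N, h⟩ := main E hE
  -- pick a large n
  obtain ⟨n, hn⟩ : ∃ n : ℕ, (n : ℤ) ≥ max N (2 * (|c| + |d|) + 1) :=
    ⟨(max N (2 * (|c| + |d|) + 1)).toNat, Int.self_le_toNat _⟩
  obtain ⟨hmem, hub⟩ := hcontra n
  obtain ⟨k, hk, hkb⟩ := h (n : ℤ) (le_trans (le_max_left _ _) hn) ⟨_, hmem⟩
  have hkub := hub k hk
  -- so c*n + d ≤ -((n^2+n)/2)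
  have hdvd : (2 : ℤ) ∣ (n : ℤ) ^ 2 + (n : ℤ) := by
    have := Int.even_mul_succ_self (n : ℤ)
    obtain ⟨r, hr⟩ := this
    exact ⟨r, by ring_nf; ring_nf at hr; omega⟩
  obtain ⟨r, hr⟩ := hdvd
  have hdiv : ((n : ℤ) ^ 2 + (n : ℤ)) / 2 = r := by
    rw [hr]; exact Int.mul_ediv_cancel_left r (by norm_num)
  have hnb : (n : ℤ) ≥ 2 * (|c| + |d|) + 1 := le_trans (le_max_right _ _) hn
  have habs1 : -|c| ≤ c := neg_abs_le c
  have habs2 : -|d| ≤ d := neg_abs_le d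
  rw [hdiv] at hkub
  have h1 : c * (n : ℤ) + d ≤ -r := le_trans hkb hkub
  have h2 : -(|c| * (n : ℤ) + |d|) ≤ c * (n : ℤ) + d := by
    have : -|c| * n ≤ c * n := mul_le_mul_of_nonneg_right habs1 (by positivity)
    linarith
  -- 2r = n^2 + n
  nlinarith [hr, h1, h2, abs_nonneg c, abs_nonneg d]
end
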